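/- arXiv:1508.06031 — 8 statements merged into one kernel-verified Lean document; each statement's English description precedes it below -/
import Mathlib

section
/- Let p be an odd prime, p \le n < 2p, and m an integer with representative \bar{m}, 0 \le \bar{m} < p. Then p^{-1} \sum_{\zeta \in \mu_p} \zeta^m (1-\zeta^{-1})^n = (-1)^{\bar{m}} \binom{n}{\bar{m}} - (-1)^{\bar{m}} \binom{n}{\bar{m}+p}. -/
/-!
Expanding `(1 - ζ⁻ᵏ)ⁿ` binomially turns the sum into `∑ⱼ (-1)ʲ (n choose j) ∑ₖ ζ^{k(m-j)}`, and the
roots-of-unity filter `p⁻¹ ∑ₖ ζ^{kd} = [p ∣ d]` keeps exactly the `j ≤ n` with `j ≡ m̄ (mod p)`.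
Since `n < 2p`, these are among `m̄` and `m̄ + p`, and the binomial coefficient vanishes for whichever
of the two exceeds `n`; finally `(-1)^(m̄ + p) = -(-1)^m̄` as `p` is odd.
-/

open Finset

namespace IsPrimitiveRoot

variable {K : Type*} [Field K] {ζ : K} {p : ℕ}

theorem sum_range_pow_zpow (hζ : IsPrimitiveRoot ζ p) (d : ℤ) :
    ∑ k ∈ range p, (ζ ^ k) ^ d = if (p : ℤ) ∣ d then (p : K) else 0 := by
  simp_rw [← zpow_natCast ζ, zpow_comm _ _ d, zpow_natCast]
  split_ifs with hd
  · simp [(hζ.zpow_eq_one_iff_dvd d).mpr hd]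
  · have hne : ζ ^ d ≠ 1 := mt (hζ.zpow_eq_one_iff_dvd d).mp hd
    rw [geom_sum_eq hne, ← zpow_natCast, zpow_comm, zpow_natCast, hζ.pow_eq_one, one_zpow,
      sub_self, zero_div]

theorem inv_mul_sum_range_sum_mul_pow_zpow (hζ : IsPrimitiveRoot ζ p) (hp : (p : K) ≠ 0)
    {ι : Type*} (s : Finset ι) (c : ι → K) (e : ι → ℤ) :
    (p : K)⁻¹ * ∑ k ∈ range p, ∑ j ∈ s, c j * (ζ ^ k) ^ e j =
      ∑ j ∈ s with (p : ℤ) ∣ e j, c j := by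
  rw [sum_comm]
  simp_rw [← mul_sum, hζ.sum_range_pow_zpow, mul_ite, mul_zero, ← sum_filter, mul_sum]
  exact sum_congr rfl fun j _ => by rw [mul_comm (c j), inv_mul_cancel_left₀ hp]

end IsPrimitiveRoot

theorem zpow_mul_one_sub_inv_pow {K : Type*} [Field K] {x : K} (hx : x ≠ 0) (m : ℤ) (n : ℕ) :
    x ^ m * (1 - x⁻¹) ^ n = ∑ j ∈ range (n + 1), (-1) ^ j * (n.choose j : K) * x ^ (m - j) := by
  rw [sub_eq_neg_add, add_pow, mul_sum]
  refine sum_congr rfl fun j _ => ?_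
  rw [zpow_sub₀ hx, zpow_natCast, one_pow, mul_one, neg_pow, inv_pow]
  ring

theorem eq_or_eq_add_of_dvd_sub {p j mbar : ℕ} {m : ℤ} (hmbar : mbar < p) (hj : j < 2 * p)
    (hcong : m ≡ mbar [ZMOD p]) (hdvd : (p : ℤ) ∣ m - j) : j = mbar ∨ j = mbar + p := by
  obtain ⟨t, ht⟩ : (p : ℤ) ∣ j - mbar := by
    have := hcong.dvd.add hdvd
    rwa [show (mbar : ℤ) - m + (m - j) = -(j - mbar) by ring, dvd_neg] at this
  have ht0 : 0 ≤ t := by nlinarith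
  have ht1 : t ≤ 1 := by nlinarith
  obtain rfl | rfl : t = 0 ∨ t = 1 := by omega
  all_goals omega

theorem sum_filter_dvd_sub_neg_one_pow_mul_choose {R : Type*} [CommRing R] {p n mbar : ℕ} {m : ℤ}
    (hn : n < 2 * p) (hmbar : mbar < p) (hcong : m ≡ mbar [ZMOD p]) :
    ∑ j ∈ range (n + 1) with (p : ℤ) ∣ m - ((j : ℕ) : ℤ), (-1 : R) ^ j * (n.choose j : R) =
      (-1) ^ mbar * (n.choose mbar : R) + (-1) ^ (mbar + p) * (n.choose (mbar + p) : R) := by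
  rw [← sum_pair (f := fun j => (-1 : R) ^ j * (n.choose j : R)) (show mbar ≠ mbar + p by omega)]
  refine sum_subset (fun j hj => ?_) fun j hj hj' => ?_
  · rw [mem_filter, mem_range] at hj
    simpa using eq_or_eq_add_of_dvd_sub hmbar (by omega) hcong hj.2
  · have hdvd : (p : ℤ) ∣ m - j := by
      obtain rfl | rfl : j = mbar ∨ j = mbar + p := by simpa using hj
      · exact hcong.symm.dvd
      · simpa [sub_add_eq_sub_sub] using hcong.symm.dvd.sub (dvd_refl (p : ℤ))
    have hnj : n < j := by
      by_contra! h
      exact hj' (mem_filter.mpr ⟨mem_range.mpr (by omega), hdvd⟩)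
    rw [Nat.choose_eq_zero_of_lt hnj, Nat.cast_zero, mul_zero]

theorem stmt_2_general (p : ℕ) (hodd : Odd p) (n : ℕ) (hn2 : n < 2 * p)
    (m : ℤ) (mbar : ℕ) (hmbar : mbar < p) (hcong : m ≡ (mbar : ℤ) [ZMOD (p : ℤ)])
    (ζ : ℂ) (hζ : IsPrimitiveRoot ζ p) :
    (p : ℂ)⁻¹ * ∑ k ∈ Finset.range p, (ζ ^ k) ^ m * (1 - (ζ ^ k)⁻¹) ^ n =
      (-1 : ℂ) ^ mbar * (n.choose mbar : ℂ) - (-1 : ℂ) ^ mbar * (n.choose (mbar + p) : ℂ) := by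
  have hp : (p : ℂ) ≠ 0 := by exact_mod_cast hodd.pos.ne'
  have hζk (k : ℕ) : ζ ^ k ≠ 0 := pow_ne_zero k (hζ.ne_zero hodd.pos.ne')
  simp_rw [zpow_mul_one_sub_inv_pow (hζk _), hζ.inv_mul_sum_range_sum_mul_pow_zpow hp,
    sum_filter_dvd_sub_neg_one_pow_mul_choose hn2 hmbar hcong, pow_add, hodd.neg_one_pow]
  ring

/-- For `p` an odd prime, `p ≤ n < 2p`, and `m ≡ m̄ (mod p)` with `0 ≤ m̄ < p`,
`p⁻¹ ∑_{ζ ∈ μ_p} ζ^m (1 - ζ⁻¹)^n = (-1)^m̄ (n choose m̄) - (-1)^m̄ (n choose (m̄+p))`. -/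
theorem stmt_2 (p : ℕ) (hp : p.Prime) (hodd : Odd p) (n : ℕ) (hn1 : p ≤ n) (hn2 : n < 2 * p)
    (m : ℤ) (mbar : ℕ) (hmbar : mbar < p) (hcong : m ≡ (mbar : ℤ) [ZMOD (p : ℤ)])
    (ζ : ℂ) (hζ : IsPrimitiveRoot ζ p) :
    (p : ℂ)⁻¹ * ∑ k ∈ Finset.range p, (ζ ^ k) ^ m * (1 - (ζ ^ k)⁻¹) ^ n =
      (-1 : ℂ) ^ mbar * (n.choose mbar : ℂ) - (-1 : ℂ) ^ mbar * (n.choose (mbar + p) : ℂ) :=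
  stmt_2_general p hodd n hn2 m mbar hmbar hcong ζ hζ
end

section
/- Let p be an odd prime and n \ge 1 an integer. Then p^{\lfloor (n+p-2)/(p-1) \rfloor - 1} divides the integer b_{m,n} = p^{-1} \sum_{\zeta \in \mu_p} \zeta^m (1-\zeta^{-1})^n for every integer m. In particular, if j(p-1) < n \le (j+1)(p-1) then p^j divides b_{m,n}. -/
open Finset

/-- Alternating binomial sums over a residue class mod `p`:
`FFc p n m = ∑_{0 ≤ i ≤ n, i ≡ m mod p} (-1)^i C(n,i)`. -/
def FFc (p n : ℕ) (m : ℤ) : ℤ :=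
  ∑ i ∈ Finset.range (n+1), if (p:ℤ) ∣ (m - i) then (-1)^i * (n.choose i) else 0

lemma FFc_rec (p n : ℕ) (m : ℤ) : FFc p (n+1) m = FFc p n m - FFc p n (m-1) := by
  classical
  set g : ℕ → ℤ := fun i => if (p:ℤ) ∣ (m - i) then (-1:ℤ)^i * (n.choose i) else 0 with hg
  set h : ℕ → ℤ := fun i => if (p:ℤ) ∣ (m - (i+1:ℕ)) then (-1:ℤ)^(i+1) * (n.choose i) else 0 with hh
  set G : ℕ → ℤ := fun i => if (p:ℤ) ∣ (m - i) then (-1:ℤ)^i * ((n+1).choose i) else 0 with hG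
  have hFn : FFc p n m = ∑ i ∈ range (n+1), g i := rfl
  have hFn1 : FFc p (n+1) m = ∑ i ∈ range (n+1+1), G i := rfl
  have hGsplit : ∀ i : ℕ, G (i+1) = h i + g (i+1) := by
    intro i
    simp only [hG, hh, hg, Nat.choose_succ_succ]
    split <;> push_cast <;> ring
  have hsum_h : ∑ i ∈ range (n+1), h i = - FFc p n (m-1) := by
    rw [show FFc p n (m-1) = ∑ i ∈ range (n+1),
        (if (p:ℤ) ∣ (m - 1 - i) then (-1:ℤ)^i * (n.choose i) else 0) from rfl,
      ← Finset.sum_neg_distrib]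
    apply Finset.sum_congr rfl
    intro i _
    simp only [hh]
    have : m - (i+1:ℕ) = (m - 1) - i := by push_cast; ring
    rw [this]
    split <;> push_cast <;> ring
  have hgtop : g (n+1) = 0 := by simp [hg, Nat.choose_succ_self]
  have hsum_g : ∑ i ∈ range (n+1), g (i+1) = FFc p n m - g 0 := by
    rw [Finset.sum_range_succ, hgtop, add_zero]
    have := Finset.sum_range_succ' g n
    rw [hFn, this]
    ring
  have hG0 : G 0 = g 0 := by simp [hG, hg]
  rw [hFn1, Finset.sum_range_succ' G (n+1)]
  simp only [hGsplit, hG0]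
  rw [Finset.sum_add_distrib, hsum_h, hsum_g]
  ring

lemma FFc_add (p n t : ℕ) (m : ℤ) :
    FFc p (n+t) m = ∑ s ∈ range (t+1), (-1:ℤ)^s * (t.choose s) * FFc p n (m - s) := by
  induction t generalizing m with
  | zero => simp
  | succ t ih =>
    rw [show n + (t+1) = (n+t)+1 from rfl, FFc_rec, ih m, ih (m-1)]
    set g : ℕ → ℤ := fun s => (-1:ℤ)^s * (t.choose s) * FFc p n (m - s) with hgdef
    set g' : ℕ → ℤ := fun s => (-1:ℤ)^s * (t.choose s) * FFc p n (m - 1 - s) with hg'def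
    set G : ℕ → ℤ := fun s => (-1:ℤ)^s * ((t+1).choose s) * FFc p n (m - s) with hGdef
    have hsplit : ∀ s : ℕ, G (s+1) = -(g' s) + g (s+1) := by
      intro s
      simp only [hGdef, hg'def, hgdef, Nat.choose_succ_succ, Nat.succ_eq_add_one]
      have : m - (s+1:ℕ) = m - 1 - s := by push_cast; ring
      rw [this]
      push_cast
      ring
    have hgtop : g (t+1) = 0 := by simp [hgdef, Nat.choose_succ_self]
    have hG0 : G 0 = g 0 := by simp [hGdef, hgdef]
    rw [Finset.sum_range_succ' G (t+1)]
    simp only [hsplit, hG0]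
    rw [Finset.sum_add_distrib, Finset.sum_neg_distrib]
    have hsum_g : ∑ s ∈ range (t+1), g (s+1) = (∑ s ∈ range (t+1), g s) - g 0 := by
      rw [Finset.sum_range_succ, hgtop, add_zero]
      have := Finset.sum_range_succ' g t
      rw [this]; ring
    rw [hsum_g]
    ring

lemma indicator_window (p : ℕ) (hp : 0 < p) (a : ℤ) :
    ∑ s ∈ range p, (if (p:ℤ) ∣ (a - s) then (1:ℤ) else 0) = 1 := by
  classical
  have hmod : 0 ≤ a % p ∧ a % p < p := ⟨Int.emod_nonneg a (by exact_mod_cast hp.ne'),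
    Int.emod_lt_of_pos a (by exact_mod_cast hp)⟩
  set s0 : ℕ := (a % p).toNat with hs0
  have hs0cast : (s0 : ℤ) = a % p := Int.toNat_of_nonneg hmod.1
  have hs0mem : s0 ∈ range p := by
    rw [Finset.mem_range]
    have := hmod.2
    omega
  rw [Finset.sum_eq_single_of_mem s0 hs0mem]
  · rw [if_pos]
    rw [hs0cast]
    exact Int.dvd_self_sub_of_emod_eq rfl
  · intro s hs hne
    rw [if_neg]
    intro hdvd
    apply hne
    have h1 : ((s:ℤ)) % p = a % p := Int.modEq_iff_dvd.mpr hdvd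
    have h2 : ((s:ℤ)) % p = s := Int.emod_eq_of_lt (by positivity) (by exact_mod_cast Finset.mem_range.mp hs)
    have : (s:ℤ) = (s0:ℤ) := by rw [hs0cast, ← h1, h2]
    exact_mod_cast this

lemma FFc_window (p n : ℕ) (hp : 0 < p) (hn : 1 ≤ n) (m : ℤ) :
    ∑ s ∈ range p, FFc p n (m - s) = 0 := by
  classical
  unfold FFc
  rw [Finset.sum_comm]
  have : ∀ i ∈ range (n+1),
      (∑ s ∈ range p, if (p:ℤ) ∣ (m - s - i) then (-1:ℤ)^i * (n.choose i) else 0)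
      = (-1:ℤ)^i * (n.choose i) := by
    intro i _
    have h1 : (∑ s ∈ range p, if (p:ℤ) ∣ (m - s - i) then (-1:ℤ)^i * (n.choose i) else 0)
        = (-1:ℤ)^i * (n.choose i) * ∑ s ∈ range p, (if (p:ℤ) ∣ ((m - i) - s) then (1:ℤ) else 0) := by
      rw [Finset.mul_sum]
      apply Finset.sum_congr rfl
      intro s _
      have : m - s - i = m - i - s := by ring
      rw [this]
      split <;> ring
    rw [h1, indicator_window p hp, mul_one]
  rw [Finset.sum_congr rfl this, Int.alternating_sum_range_choose, if_neg (by omega)]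

lemma choose_sign_mod (p : ℕ) (hp : p.Prime) :
    ∀ s, s < p → (p:ℤ) ∣ ((-1:ℤ)^s * ((p-1).choose s) - 1) := by
  intro s
  induction s with
  | zero => intro _; simp
  | succ s ih =>
    intro hs1
    have ih' := ih (by omega)
    have hpascal : (p-1).choose s + (p-1).choose (s+1) = p.choose (s+1) := by
      obtain ⟨q, rfl⟩ : ∃ q, p = q + 1 := ⟨p-1, by have := hp.two_le; omega⟩
      simp [Nat.choose_succ_succ]
    have hdvd : (p:ℤ) ∣ (p.choose (s+1) : ℤ) :=
      Int.natCast_dvd_natCast.mpr (hp.dvd_choose_self (by omega) hs1)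
    have hc : (((p-1).choose (s+1) : ℕ) : ℤ) = (p.choose (s+1) : ℤ) - ((p-1).choose s : ℤ) := by
      have := congrArg (fun x : ℕ => (x:ℤ)) hpascal
      push_cast at this
      linarith
    have key : (-1:ℤ)^(s+1) * ((p-1).choose (s+1)) - 1
        = (-1:ℤ)^(s+1) * (p.choose (s+1)) + ((-1:ℤ)^s * ((p-1).choose s) - 1) := by
      rw [hc]; ring
    rw [key]
    exact dvd_add (hdvd.mul_left _) ih'

lemma main_dvd (p : ℕ) (hp : p.Prime) :
    ∀ j n m, j * (p-1) < n → (p:ℤ)^j ∣ FFc p n m := by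
  intro j
  induction j with
  | zero => intro n m _; simp
  | succ j ih =>
    intro n m hn
    have hp2 := hp.two_le
    set n0 := n - (p-1) with hn0
    have hn0' : j * (p-1) < n0 := by
      have : (j+1)*(p-1) = j*(p-1) + (p-1) := by ring
      omega
    have hne : n = n0 + (p-1) := by omega
    have hrange : (p-1) + 1 = p := by omega
    rw [hne, FFc_add p n0 (p-1) m, hrange]
    have hsplit : ∀ s ∈ range p, (-1:ℤ)^s * ((p-1).choose s) * FFc p n0 (m - s)
        = ((-1:ℤ)^s * ((p-1).choose s) - 1) * FFc p n0 (m - s) + FFc p n0 (m - s) := by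
      intro s _; ring
    rw [Finset.sum_congr rfl hsplit, Finset.sum_add_distrib,
      FFc_window p n0 hp.pos (by omega) m, add_zero]
    apply Finset.dvd_sum
    intro s hs
    rw [pow_succ, mul_comm ((p:ℤ)^j)]
    exact mul_dvd_mul (choose_sign_mod p hp s (Finset.mem_range.mp hs)) (ih n0 (m - s) hn0')

lemma b_eq (p : ℕ) (hp : p.Prime) (n : ℕ) (m : ℤ) (ζ : ℂ) (hζ : IsPrimitiveRoot ζ p) (b : ℤ)
    (hb : (b : ℂ) = (p : ℂ)⁻¹ * ∑ k ∈ Finset.range p, (ζ ^ k) ^ m * (1 - (ζ ^ k)⁻¹) ^ n) :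
    b = FFc p n m := by
  classical
  have hp0 : (0:ℕ) < p := hp.pos
  have hζp : ζ ^ (p:ℕ) = 1 := hζ.pow_eq_one
  have hζ0 : ζ ≠ 0 := by
    intro h; rw [h] at hζp; simp [zero_pow hp0.ne'] at hζp
  have hpC : (p:ℂ) ≠ 0 := by exact_mod_cast hp0.ne'
  have geom : ∀ d : ℤ, ∑ k ∈ range p, (ζ ^ d) ^ k = if (p:ℤ) ∣ d then (p:ℂ) else 0 := by
    intro d
    by_cases h : (p:ℤ) ∣ d
    · rw [if_pos h, (hζ.zpow_eq_one_iff_dvd d).mpr h]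
      simp
    · rw [if_neg h]
      have hw1 : ζ ^ d ≠ 1 := fun hc => h ((hζ.zpow_eq_one_iff_dvd d).mp hc)
      have hwp : (ζ ^ d) ^ (p:ℕ) = 1 := by
        rw [← zpow_natCast (ζ ^ d) p, ← zpow_mul, mul_comm, zpow_mul, zpow_natCast, hζp, one_zpow]
      have := geom_sum_mul (ζ ^ d) p
      rw [hwp, sub_self] at this
      exact (mul_eq_zero.mp this).resolve_right (sub_ne_zero.mpr hw1)
  have hterm : ∀ k i : ℕ, (ζ ^ k) ^ m * ((ζ ^ k)⁻¹) ^ i = (ζ ^ (m - (i:ℤ))) ^ k := by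
    intro k i
    have hzk : (ζ:ℂ) ^ k ≠ 0 := pow_ne_zero _ hζ0
    rw [← zpow_natCast ((ζ ^ k)⁻¹) i, inv_zpow, ← zpow_neg, ← zpow_add₀ hzk,
      show m + -(i:ℤ) = m - i by ring]
    rw [← zpow_natCast ζ k, ← zpow_mul, mul_comm, zpow_mul, zpow_natCast]
  have key : ∑ k ∈ Finset.range p, (ζ ^ k) ^ m * (1 - (ζ ^ k)⁻¹) ^ n
      = (p:ℂ) * ((FFc p n m : ℤ) : ℂ) := by
    have expand : ∀ k ∈ range p, (ζ ^ k) ^ m * (1 - (ζ ^ k)⁻¹) ^ n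
        = ∑ i ∈ range (n+1), (-1:ℂ)^i * (n.choose i) * (ζ ^ (m - (i:ℤ))) ^ k := by
      intro k _
      rw [sub_eq_add_neg, add_comm, add_pow, Finset.mul_sum]
      apply Finset.sum_congr rfl
      intro i _
      rw [neg_pow, ← hterm k i]
      ring
    rw [Finset.sum_congr rfl expand, Finset.sum_comm]
    unfold FFc
    push_cast
    rw [Finset.mul_sum]
    apply Finset.sum_congr rfl
    intro i _
    rw [← Finset.mul_sum, geom (m - (i:ℤ))]
    split <;> ring
  rw [key] at hb
  rw [inv_mul_cancel_left₀ hpC] at hb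
  exact_mod_cast hb

/-- For `p` an odd prime and `n ≥ 1`, the integer
`b_{m,n} = p⁻¹ ∑_{ζ ∈ μ_p} ζ^m (1-ζ⁻¹)^n` is divisible by
`p^(⌊(n+p-2)/(p-1)⌋ - 1)`; in particular, if `j(p-1) < n ≤ (j+1)(p-1)` then `p^j ∣ b_{m,n}`. -/
theorem stmt_3 (p : ℕ) (hp : p.Prime) (hodd : Odd p) (n : ℕ) (hn : 1 ≤ n) (m : ℤ)
    (ζ : ℂ) (hζ : IsPrimitiveRoot ζ p) (b : ℤ)
    (hb : (b : ℂ) = (p : ℂ)⁻¹ * ∑ k ∈ Finset.range p, (ζ ^ k) ^ m * (1 - (ζ ^ k)⁻¹) ^ n) :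
    (p : ℤ) ^ ((n + p - 2) / (p - 1) - 1) ∣ b ∧
      ∀ j : ℕ, j * (p - 1) < n → n ≤ (j + 1) * (p - 1) → (p : ℤ) ^ j ∣ b := by
  have hb' : b = FFc p n m := b_eq p hp n m ζ hζ b hb
  have hp2 := hp.two_le
  have main : ∀ j : ℕ, j * (p-1) < n → (p:ℤ)^j ∣ b := by
    intro j hj
    rw [hb']
    exact main_dvd p hp j n m hj
  constructor
  · apply main
    obtain ⟨a', ha'⟩ : ∃ a', (n + p - 2) / (p - 1) = a' + 1 := by
      have h1 : 1 ≤ (n + p - 2) / (p - 1) := (Nat.one_le_div_iff (by omega)).mpr (by omega)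
      exact ⟨(n + p - 2) / (p - 1) - 1, by omega⟩
    have hd : (n + p - 2) / (p - 1) * (p - 1) ≤ n + p - 2 := Nat.div_mul_le_self _ _
    rw [ha'] at hd
    have hd2 : a' * (p-1) + 1 * (p-1) ≤ n + p - 2 := by rw [← Nat.add_mul]; exact hd
    have he : (n + p - 2) / (p - 1) - 1 = a' := by omega
    rw [he]
    omega
  · intro j hj _
    exact main j hj
end

section
/- Let \Sigma be a finite cyclic group of order f with p \nmid f, where p is a prime, and let I = (\sigma - 1, \gamma - 1) be the augmentation ideal of \Lambda = \mathbb{Z}_p[\Sigma][[\gamma - 1]] (where \sigma generates \Sigma and \gamma is the variable of the power series ring, a group-like element). Let e_1 = \frac{1}{f}\sum_{g \in \Sigma} g be the idempotent for the trivial character. Then I is a principal ideal generated by (1 - e_1) + (\gamma - 1)e_1. -/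
/-!
Write `e` for the averaging idempotent and `s = σ - 1`. Since `σ` generates `Σ`, each `g - 1` is
a multiple of `s`, hence so is `1 - e = -f⁻¹ ∑_g (g - 1)`; and `s e = 0`. In any commutative ring
these two facts alone make `(s, x)` principal, generated by `(1 - e) + x e`: the generator
restricts to the unit `1` on the `(1 - e)`-component, where `s` lives, and to `x` on the
`e`-component, where `s` vanishes.
-/

open MonoidAlgebra GroupAlgebra PowerSeries

theorem Ideal.span_pair_eq_span_singleton_of_isIdempotentElem {A : Type*} [CommRing A] {e s : A}
    (he : IsIdempotentElem e) (hse : s * e = 0) (hs : s ∣ 1 - e) (x : A) :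
    Ideal.span {s, x} = Ideal.span {1 - e + x * e} := by
  apply le_antisymm
  · rw [Ideal.span_le, Set.insert_subset_iff, Set.singleton_subset_iff]
    constructor
    · exact Ideal.mem_span_singleton'.mpr
        ⟨s * (1 - e), by linear_combination (s - s * x) * he.eq - hse⟩
    · exact Ideal.mem_span_singleton'.mpr
        ⟨e + x * (1 - e), by linear_combination (2 * x - x * x - 1) * he.eq⟩
  · obtain ⟨c, hc⟩ := hs
    rw [Ideal.span_le, Set.singleton_subset_iff]
    exact Ideal.mem_span_pair.mpr ⟨c, e, by linear_combination -hc⟩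

theorem PadicInt.isUnit_natCast_of_not_dvd {p : ℕ} [hp : Fact p.Prime] {n : ℕ} (h : ¬p ∣ n) :
    IsUnit (n : ℤ_[p]) :=
  PadicInt.isUnit_iff.mpr (PadicInt.norm_natCast_eq_one_iff.mpr (hp.out.coprime_iff_not_dvd.mpr h))

namespace GroupAlgebra

variable {k G : Type*} [CommRing k] [Group G] [Fintype G] [Invertible (Fintype.card G : k)]

theorem isIdempotentElem_average : IsIdempotentElem (average k G) := by
  change average k G * average k G = average k G
  nth_rewrite 1 [average]
  simp only [Algebra.smul_mul_assoc, Finset.sum_mul, of_apply, mul_average_left,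
    Finset.sum_const, Finset.card_univ, ← Nat.cast_smul_eq_nsmul k, smul_smul, invOf_mul_self,
    one_smul]

theorem one_sub_average_eq_sum :
    1 - average k G = -⅟(Fintype.card G : k) • ∑ g : G, (of k G g - 1) := by
  rw [Finset.sum_sub_distrib, smul_sub, Finset.sum_const, Finset.card_univ,
    ← Nat.cast_smul_eq_nsmul k, smul_smul, neg_mul, invOf_mul_self, neg_smul, neg_smul, one_smul,
    average]
  abel

theorem of_sub_one_dvd_one_sub_average {σ : G} (hσ : ∀ g : G, g ∈ Subgroup.zpowers σ) :
    of k G σ - 1 ∣ 1 - average k G := by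
  rw [one_sub_average_eq_sum]
  refine dvd_smul_of_dvd _ (Finset.dvd_sum fun g _ => ?_)
  obtain ⟨n, rfl⟩ := mem_powers_iff_mem_zpowers.mpr (hσ g)
  simpa only [map_pow] using sub_one_dvd_pow_sub_one (of k G σ) n

end GroupAlgebra

/-- Let `Σ` be a finite cyclic group of order `f` prime to `p`, generated by `σ`, and let
`Λ = ℤ_p[Σ][[T]]` with group-like element `γ = 1 + T`.  With `e₁ = f⁻¹ ∑_{g} g` the
idempotent of the trivial character, the augmentation ideal `I = (σ - 1, γ - 1)` is
principal, generated by `(1 - e₁) + (γ - 1) e₁`. -/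
theorem stmt_6 (p : ℕ) [Fact (Nat.Prime p)] (G : Type*) [CommGroup G] [Fintype G]
    (σ : G) (hσ : ∀ g : G, g ∈ Subgroup.zpowers σ)
    (hpf : ¬ p ∣ Fintype.card G)
    (e₁ : MonoidAlgebra ℤ_[p] G)
    (he₁ : e₁ = Ring.inverse ((Fintype.card G : ℤ_[p])) •
      ∑ g : G, MonoidAlgebra.of ℤ_[p] G g) :
    Ideal.span ({PowerSeries.C (MonoidAlgebra.of ℤ_[p] G σ) - 1,
        ((1 : PowerSeries (MonoidAlgebra ℤ_[p] G)) + PowerSeries.X) - 1} :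
          Set (PowerSeries (MonoidAlgebra ℤ_[p] G))) =
      Ideal.span {PowerSeries.C (1 - e₁) +
        (((1 : PowerSeries (MonoidAlgebra ℤ_[p] G)) + PowerSeries.X) - 1) *
          PowerSeries.C e₁} := by
  let _ := (PadicInt.isUnit_natCast_of_not_dvd hpf).invertible
  obtain rfl : e₁ = average ℤ_[p] G := by rw [he₁, Ring.inverse_invertible]; rfl
  have hse : C (of ℤ_[p] G σ - 1) * C (average ℤ_[p] G) = 0 := by
    rw [← map_mul, sub_mul, one_mul, of_apply, mul_average_left, sub_self, map_zero]
  simpa only [map_sub, map_one, add_sub_cancel_left] using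
    Ideal.span_pair_eq_span_singleton_of_isIdempotentElem (isIdempotentElem_average.map C) hse
      (by simpa only [map_sub, map_one] using map_dvd C (of_sub_one_dvd_one_sub_average hσ)) X
end

section
/- Let p be an odd prime and p < n < 2p. Then \binom{n}{n-p} - 1 \equiv p \cdot H_{n-p} \pmod{p^2}, where H_m = \sum_{j=1}^m 1/j is the harmonic number (an element of \mathbb{Z}_{(p)} since m < p). -/
lemma aux_prod_sum {R : Type*} [CommRing R] (c : R) (m : ℕ) (a : ℕ → R) :
    c ^ 2 ∣ (∏ j ∈ Finset.range m, (1 + c * a j)) - (1 + c * ∑ j ∈ Finset.range m, a j) := by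
  induction m with
  | zero => simp
  | succ m ih =>
    obtain ⟨k, hk⟩ := ih
    rw [Finset.prod_range_succ, Finset.sum_range_succ]
    exact ⟨(∑ j ∈ Finset.range m, a j) * a m + k * (1 + c * a m),
      by linear_combination (1 + c * a m) * hk⟩

lemma aux_fact (p m : ℕ) : (p + m).factorial = p.factorial * ∏ j ∈ Finset.range m, (p + 1 + j) := by
  induction m with
  | zero => simp
  | succ m ih =>
    rw [Finset.prod_range_succ, ← mul_assoc, ← ih]
    rw [← Nat.add_assoc, Nat.factorial_succ]
    ring

lemma aux_isUnit (p : ℕ) [Fact (Nat.Prime p)] (k : ℕ) (h0 : 0 < k) (hk : k < p) :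
    IsUnit ((k : ℕ) : ℤ_[p]) := by
  rw [PadicInt.isUnit_iff]
  have h1 : ‖((k : ℤ) : ℤ_[p])‖ ≤ 1 := PadicInt.norm_le_one _
  have h2 : ¬ ‖((k : ℤ) : ℤ_[p])‖ < 1 := by
    rw [PadicInt.norm_int_lt_one_iff_dvd]
    intro hdvd
    have := Int.le_of_dvd (by exact_mod_cast h0) hdvd
    omega
  push_cast at h1 h2 ⊢
  linarith

/-- For `p` an odd prime and `p < n < 2p`, `(n choose (n-p)) - 1 ≡ p·H_{n-p} (mod p²)`,
where `H_m = ∑_{j=1}^m 1/j` is the harmonic number (`p`-integral since `m < p`). -/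
theorem stmt_8 (p : ℕ) [Fact (Nat.Prime p)] (hodd : Odd p) (n : ℕ)
    (hn1 : p < n) (hn2 : n < 2 * p)
    (H : ℤ_[p])
    (hH : H = ∑ j ∈ Finset.range (n - p), Ring.inverse (((j + 1 : ℕ) : ℤ_[p]))) :
    (p : ℤ_[p]) ^ 2 ∣ ((n.choose (n - p) : ℤ_[p]) - 1 - (p : ℤ_[p]) * H) := by
  set m := n - p with hm
  have hnm : n = p + m := by omega
  have hmp : m < p := by omega
  -- choose * m! * p! = (p+m)!
  have h1 : (p + m).choose m * m.factorial * p.factorial = (p + m).factorial := by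
    have := Nat.choose_mul_factorial_mul_factorial (Nat.le_add_left m p)
    simpa [Nat.add_sub_cancel] using this
  have h2 : (p + m).choose m * m.factorial * p.factorial
      = p.factorial * ∏ j ∈ Finset.range m, (p + 1 + j) := by
    rw [h1, aux_fact]
  have h3 : (p + m).choose m * m.factorial = ∏ j ∈ Finset.range m, (p + 1 + j) := by
    have hp := Nat.factorial_pos p
    have := Nat.eq_of_mul_eq_mul_right hp (by linarith [h2] : (p + m).choose m * m.factorial * p.factorial = (∏ j ∈ Finset.range m, (p + 1 + j)) * p.factorial)
    exact this
  -- cast to ℤ_[p]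
  have h4 : ((p + m).choose m : ℤ_[p]) * (m.factorial : ℤ_[p])
      = ∏ j ∈ Finset.range m, ((p : ℤ_[p]) + ((j + 1 : ℕ) : ℤ_[p])) := by
    have := congrArg (fun x : ℕ => (x : ℤ_[p])) h3
    push_cast at this ⊢
    convert this using 2 with j
    push_cast
    ring
  -- each factor: p + (j+1) = (j+1) * (1 + p * inverse (j+1))
  have h5 : ∀ j ∈ Finset.range m, (p : ℤ_[p]) + ((j + 1 : ℕ) : ℤ_[p])
      = ((j + 1 : ℕ) : ℤ_[p]) * (1 + (p : ℤ_[p]) * Ring.inverse (((j + 1 : ℕ) : ℤ_[p]))) := by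
    intro j hj
    rw [Finset.mem_range] at hj
    have hu : IsUnit (((j + 1 : ℕ)) : ℤ_[p]) := aux_isUnit p (j + 1) (by omega) (by omega)
    have : ((j + 1 : ℕ) : ℤ_[p]) * Ring.inverse (((j + 1 : ℕ) : ℤ_[p])) = 1 :=
      Ring.mul_inverse_cancel _ hu
    linear_combination (-(p : ℤ_[p])) * this
  have h6 : (∏ j ∈ Finset.range m, ((p : ℤ_[p]) + ((j + 1 : ℕ) : ℤ_[p])))
      = (m.factorial : ℤ_[p]) * ∏ j ∈ Finset.range m, (1 + (p : ℤ_[p]) * Ring.inverse (((j + 1 : ℕ) : ℤ_[p]))) := by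
    rw [Finset.prod_congr rfl h5, Finset.prod_mul_distrib]
    congr 1
    rw [← Nat.cast_prod]
    congr 1
    push_cast
    exact_mod_cast Finset.prod_range_add_one_eq_factorial m
  have hfne : (m.factorial : ℤ_[p]) ≠ 0 := by
    exact_mod_cast Nat.cast_ne_zero.mpr (Nat.factorial_ne_zero m)
  have h7 : ((p + m).choose m : ℤ_[p])
      = ∏ j ∈ Finset.range m, (1 + (p : ℤ_[p]) * Ring.inverse (((j + 1 : ℕ) : ℤ_[p]))) := by
    have := h4.trans h6
    exact mul_right_cancel₀ hfne (by linear_combination this - (∏ j ∈ Finset.range m, (1 + (p : ℤ_[p]) * Ring.inverse (((j + 1 : ℕ) : ℤ_[p])))) * (0:ℤ_[p]))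
  have hdvd := aux_prod_sum (p : ℤ_[p]) m (fun j => Ring.inverse (((j + 1 : ℕ) : ℤ_[p])))
  rw [hnm, hH, h7, sub_sub]
  exact hdvd
end

section
/- Let p be a prime, and m \in \mathbb{Z}_{(p)} with reduction \bar{m} \in \{0, \ldots, p-1\} modulo p, and let 0 \le n \le p-1. Then \binom{m}{n}\binom{n}{\bar{m}} \equiv 0 \pmod{p} if \bar{m} \ne n, and \binom{m}{n}\binom{n}{\bar{m}} \equiv 1 \pmod{p} if \bar{m} = n. Here \binom{m}{n} = m(m-1)\cdots(m-n+1)/n! is the generalized binomial coefficient in \mathbb{Z}_{(p)}. -/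
lemma dvd_iff_toZMod_eq_zero {p : ℕ} [Fact (Nat.Prime p)] (x : ℤ_[p]) :
    (p : ℤ_[p]) ∣ x ↔ PadicInt.toZMod x = 0 := by
  rw [← RingHom.mem_ker, PadicInt.ker_toZMod, PadicInt.maximalIdeal_eq_span_p,
    Ideal.mem_span_singleton]

/-- For a prime `p`, `m ∈ ℤ_p` with residue `m̄ ∈ {0, …, p-1}`, and `0 ≤ n ≤ p-1`:
`(m choose n)·(n choose m̄) ≡ 0 (mod p)` if `m̄ ≠ n`, and `≡ 1 (mod p)` if `m̄ = n`,
where `(m choose n) = m(m-1)⋯(m-n+1)/n!` is the generalized binomial coefficient. -/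
theorem stmt_10 (p : ℕ) [Fact (Nat.Prime p)] (m : ℤ_[p]) (mbar : ℕ) (hmbar : mbar < p)
    (hres : (p : ℤ_[p]) ∣ m - (mbar : ℤ_[p])) (n : ℕ) (hn : n ≤ p - 1)
    (binom : ℤ_[p])
    (hbinom : binom =
      (∏ j ∈ Finset.range n, (m - j)) * Ring.inverse ((n.factorial : ℤ_[p]))) :
    (mbar ≠ n → (p : ℤ_[p]) ∣ binom * (n.choose mbar : ℤ_[p])) ∧
      (mbar = n → (p : ℤ_[p]) ∣ binom * (n.choose mbar : ℤ_[p]) - 1) := by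
  have hp := (Fact.out : Nat.Prime p)
  have hnp : n < p := lt_of_le_of_lt hn (Nat.sub_lt hp.pos one_pos)
  have hfac0 : ((n.factorial : ZMod p)) ≠ 0 := by
    rw [Ne, ZMod.natCast_eq_zero_iff]
    exact fun h => absurd (hp.dvd_factorial.mp h) (not_le.mpr hnp)
  have hunit : IsUnit ((n.factorial : ℤ_[p])) := by
    by_contra h
    have : (n.factorial : ℤ_[p]) ∈ IsLocalRing.maximalIdeal ℤ_[p] :=
      IsLocalRing.mem_maximalIdeal _ |>.mpr h
    rw [← PadicInt.ker_toZMod, RingHom.mem_ker, map_natCast] at this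
    exact hfac0 this
  have hfm : PadicInt.toZMod m = (mbar : ZMod p) := by
    have := (dvd_iff_toZMod_eq_zero _).mp hres
    rwa [map_sub, map_natCast, sub_eq_zero] at this
  have key : binom * (n.factorial : ℤ_[p]) = ∏ j ∈ Finset.range n, (m - j) := by
    rw [hbinom, mul_assoc, Ring.inverse_mul_cancel _ hunit, mul_one]
  have hfbinom : PadicInt.toZMod binom =
      (∏ j ∈ Finset.range n, ((mbar : ZMod p) - j)) * (n.factorial : ZMod p)⁻¹ := by
    rw [eq_mul_inv_iff_mul_eq₀ hfac0, ← map_natCast PadicInt.toZMod, ← map_mul, key,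
      map_prod]
    exact Finset.prod_congr rfl fun j _ => by rw [map_sub, map_natCast, hfm]
  constructor
  · intro hne
    rw [dvd_iff_toZMod_eq_zero, map_mul, map_natCast]
    rcases lt_or_gt_of_ne hne with hlt | hgt
    · have : (∏ j ∈ Finset.range n, ((mbar : ZMod p) - j)) = 0 :=
        Finset.prod_eq_zero (Finset.mem_range.mpr hlt) (by simp)
      rw [hfbinom, this, zero_mul, zero_mul]
    · rw [Nat.choose_eq_zero_of_lt hgt]
      simp
  · intro heq
    subst heq
    rw [dvd_iff_toZMod_eq_zero, map_sub, map_mul, map_natCast, map_one, Nat.choose_self,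
      hfbinom]
    have hnat : (∏ j ∈ Finset.range mbar, (mbar - j)) = mbar.factorial := by
      rw [← Finset.prod_range_add_one_eq_factorial mbar, ← Finset.prod_range_reflect]
      exact Finset.prod_congr rfl fun j hj => by
        rw [Finset.mem_range] at hj; omega
    have hprod : (∏ j ∈ Finset.range mbar, ((mbar : ZMod p) - j)) =
        (mbar.factorial : ZMod p) := by
      rw [← hnat, Nat.cast_prod]
      exact Finset.prod_congr rfl fun j hj => by
        rw [Finset.mem_range] at hj
        rw [Nat.cast_sub hj.le]
    rw [hprod, mul_inv_cancel₀ hfac0]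
    simp
end

section
/- Let p be a prime, k a field of characteristic p, and consider the field k((\pi)) of formal Laurent series with the Frobenius \varphi acting as the p-th power map on coefficients composed with \pi \mapsto (1+\pi)^p - 1. For the operator \gamma_1 acting by \pi \mapsto (1+\pi)^{1+p} - 1 = \pi + \pi^p + \pi^{p+1} (mod p, i.e. in characteristic p), and for the e-th root variable \pi_K with \pi_K^e = \pi where p \nmid e: if a \in k((\pi_K)) has lowest-degree term of degree n = j p^{\kappa} with p \nmid j, then (\gamma_1 - 1)(\pi_K^n) has lowest-degree term (j/e) \pi_K^{n + e p^{\kappa}(p-1)}. In particular the \pi_K-adic valuation of (\gamma_1-1)\pi_K^n equals n + e p^\kappa (p-1). -/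
/-!
Write `u = 1 + w`. Since `(1 + w) ^ m - 1 - m • w` is divisible by `w ^ 2`, comparing lowest
terms in `u ^ e = 1 + π ^ (p - 1) + π ^ p` shows that `w` has lowest term
`e⁻¹ π_K ^ (e (p - 1))`. In characteristic `p`, `u ^ p ^ κ = 1 + w ^ p ^ κ`, whose lowest term
is `e⁻¹ π_K ^ (e p ^ κ (p - 1))` because Frobenius fixes `e⁻¹ ∈ 𝔽_p`; raising this to the power
`j`, again by the first-order expansion, multiplies the lowest term by `j`. Finally
`γ₁ (π_K ^ n) - π_K ^ n = π_K ^ n (u ^ n - 1)` with `u ^ n = (u ^ p ^ κ) ^ j`.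
-/

open HahnSeries

namespace HahnSeries

section Order

variable {Γ R : Type*} [Zero Γ] [PartialOrder Γ] [Zero R] {x : R⟦Γ⟧} {g : Γ}

theorem order_eq_of_orderTop_eq (h : x.orderTop = g) : x.order = g := by
  have hx : x ≠ 0 := orderTop_ne_top.1 (h ▸ WithTop.coe_ne_top)
  exact WithTop.coe_injective ((order_eq_orderTop_of_ne_zero hx).trans h)

theorem coeff_eq_leadingCoeff_of_orderTop_eq (h : x.orderTop = g) :
    x.coeff g = x.leadingCoeff := by
  rw [leadingCoeff_eq, order_eq_of_orderTop_eq h]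

end Order

theorem orderTop_leadingCoeff_single_add_single {Γ R : Type*} [LinearOrder Γ] [AddMonoid R]
    {a b : Γ} (hab : a < b) {r : R} (hr : r ≠ 0) (r' : R) :
    (single a r + single b r').orderTop = a ∧ (single a r + single b r').leadingCoeff = r := by
  have hlt : (single a r).orderTop < (single b r').orderTop := by
    rw [orderTop_single hr]
    exact (WithTop.coe_lt_coe.2 hab).trans_le orderTop_single_le
  rw [orderTop_add_eq_left hlt, leadingCoeff_add_eq_left hlt, orderTop_single hr,
    leadingCoeff_of_single]
  exact ⟨rfl, rfl⟩

section OrderedMonoid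

variable {Γ R : Type*} [AddCommMonoid Γ] [LinearOrder Γ] [IsOrderedCancelAddMonoid Γ]

theorem orderTop_pow [Semiring R] [NoZeroDivisors R] [Nontrivial R] (x : R⟦Γ⟧) (n : ℕ) :
    (x ^ n).orderTop = n • x.orderTop := by
  induction n with
  | zero => simp
  | succ n ih => rw [pow_succ, orderTop_mul, ih, succ_nsmul]

theorem leadingCoeff_pow [Semiring R] [NoZeroDivisors R] (x : R⟦Γ⟧) (n : ℕ) :
    (x ^ n).leadingCoeff = x.leadingCoeff ^ n := by
  induction n with
  | zero => simp
  | succ n ih => rw [pow_succ, leadingCoeff_mul, ih, pow_succ]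

theorem two_nsmul_orderTop_le_orderTop_one_add_pow_sub_one_sub [CommRing R] {w : R⟦Γ⟧}
    (hw : 0 ≤ w.orderTop) (m : ℕ) :
    2 • w.orderTop ≤ ((1 + w) ^ m - 1 - (m : R) • w).orderTop := by
  induction m with
  | zero => simp
  | succ m ih =>
    have hrec : (1 + w) ^ (m + 1) - 1 - ((m + 1 : ℕ) : R) • w =
        (1 + w) * ((1 + w) ^ m - 1 - (m : R) • w) + (m : R) • w ^ 2 := by
      simp only [← C_mul_eq_smul, Nat.cast_succ, map_add, map_one]
      ring
    have h1w : 0 ≤ (1 + w).orderTop :=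
      (le_min orderTop_single_le hw).trans min_orderTop_le_orderTop_add
    rw [hrec]
    refine (le_min ?_ ?_).trans min_orderTop_le_orderTop_add
    · exact (le_add_of_nonneg_of_le h1w ih).trans orderTop_add_le_mul
    · exact orderTop_nsmul_le_orderTop_pow.trans (orderTop_le_orderTop_smul _ _)

variable [CommRing R] [IsDomain R]

theorem orderTop_leadingCoeff_one_add_pow_sub_one {w : R⟦Γ⟧} (hw : 0 < w.orderTop) {m : ℕ}
    (hm : (m : R) ≠ 0) :
    ((1 + w) ^ m - 1).orderTop = w.orderTop ∧
      ((1 + w) ^ m - 1).leadingCoeff = m * w.leadingCoeff := by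
  obtain rfl | hw0 := eq_or_ne w 0
  · simp
  have hsmul : ((m : R) • w).orderTop = w.orderTop ∧
      ((m : R) • w).leadingCoeff = m * w.leadingCoeff := by
    rw [← C_mul_eq_smul, orderTop_mul, leadingCoeff_mul, C_apply, orderTop_single hm,
      leadingCoeff_of_single, WithTop.coe_zero, zero_add]
    exact ⟨rfl, rfl⟩
  -- the remainder is divisible by `w ^ 2`, so it does not affect the lowest term
  have hlt : ((m : R) • w).orderTop < ((1 + w) ^ m - 1 - (m : R) • w).orderTop := by
    refine hsmul.1 ▸ lt_of_lt_of_le ?_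
      (two_nsmul_orderTop_le_orderTop_one_add_pow_sub_one_sub hw.le m)
    obtain ⟨g, hg⟩ := WithTop.ne_top_iff_exists.mp (orderTop_ne_top.2 hw0)
    rw [← hg, two_nsmul, ← WithTop.coe_add, WithTop.coe_lt_coe]
    exact lt_add_of_pos_right g (by exact_mod_cast hg ▸ hw)
  have hsplit : (1 + w) ^ m - 1 = (m : R) • w + ((1 + w) ^ m - 1 - (m : R) • w) := by abel
  rw [hsplit, orderTop_add_eq_left hlt, leadingCoeff_add_eq_left hlt]
  exact hsmul

theorem zero_lt_orderTop_sub_one_of_pow {u : R⟦Γ⟧} {n : ℕ} (hn : n ≠ 0)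
    (hu : 0 < (u ^ n - 1).orderTop) (hu0 : u.coeff 0 = 1) : 0 < (u - 1).orderTop := by
  rw [orderTop_self_sub_one_pos_iff, orderTop_pow] at hu
  rw [orderTop_self_sub_one_pos_iff]
  have hne : u ≠ 0 := ne_zero_of_coeff_ne_zero (hu0 ▸ one_ne_zero)
  have hord : u.order = 0 := by
    rw [← order_eq_orderTop_of_ne_zero hne, ← WithTop.coe_nsmul, WithTop.coe_eq_zero] at hu
    exact (nsmul_eq_zero_iff_right hn).1 hu.1
  rw [← order_eq_orderTop_of_ne_zero hne, hord, leadingCoeff_eq, hord, hu0]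
  exact ⟨rfl, rfl⟩

theorem orderTop_leadingCoeff_sub_one_of_pow_eq_one_add {u s : R⟦Γ⟧} {n : ℕ}
    (hn : (n : R) ≠ 0) (hs : 0 < s.orderTop) (hu : u ^ n = 1 + s) (hu0 : u.coeff 0 = 1) :
    (u - 1).orderTop = s.orderTop ∧ n * (u - 1).leadingCoeff = s.leadingCoeff := by
  have hu1 : 0 < (u - 1).orderTop :=
    zero_lt_orderTop_sub_one_of_pow (n := n) (fun h => hn (by simp [h]))
      (by rwa [hu, add_sub_cancel_left]) hu0
  have := orderTop_leadingCoeff_one_add_pow_sub_one hu1 hn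
  rwa [add_sub_cancel, hu, add_sub_cancel_left, eq_comm, and_comm, eq_comm, and_comm] at this

end OrderedMonoid

section OrderedGroup

variable {Γ K : Type*} [AddCommGroup Γ] [LinearOrder Γ] [IsOrderedAddMonoid Γ] [Field K]

theorem zero_lt_orderTop_zpow_sub_one {x : K⟦Γ⟧} (hx : 0 < (x - 1).orderTop) (m : ℤ) :
    0 < (x ^ m - 1).orderTop := by
  have hx0 : x ≠ 0 := by
    rintro rfl
    simp at hx
  simpa using (orderTopSubOnePos Γ K).zpow_mem (x := Units.mk0 x hx0) hx m

theorem orderTop_leadingCoeff_one_add_zpow_sub_one {w : K⟦Γ⟧} (hw : 0 < w.orderTop) {m : ℤ}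
    (hm : (m : K) ≠ 0) :
    ((1 + w) ^ m - 1).orderTop = w.orderTop ∧
      ((1 + w) ^ m - 1).leadingCoeff = m * w.leadingCoeff := by
  obtain ⟨n, rfl | rfl⟩ := m.eq_nat_or_neg
  · simpa using orderTop_leadingCoeff_one_add_pow_sub_one hw (m := n) (by simpa using hm)
  have h1w : 0 < (1 + w - 1).orderTop := by simpa using hw
  have hinv := zero_lt_orderTop_zpow_sub_one h1w (-n)
  rw [orderTop_self_sub_one_pos_iff] at hinv
  have hv : (1 + w) ^ n ≠ 0 := pow_ne_zero _ (fun h => by simp [h] at h1w)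
  have hsplit : (1 + w) ^ (-n : ℤ) - 1 = -((1 + w) ^ (-n : ℤ) * ((1 + w) ^ n - 1)) := by
    rw [zpow_neg, zpow_natCast]
    field_simp
    ring
  obtain ⟨hord, hlc⟩ :=
    orderTop_leadingCoeff_one_add_pow_sub_one hw (m := n) (by simpa using hm)
  rw [hsplit, orderTop_neg, leadingCoeff_neg, orderTop_mul, leadingCoeff_mul, hinv.1, hinv.2,
    hord, hlc]
  simp

theorem orderTop_leadingCoeff_one_add_zpow_mul_expChar_pow_sub_one (p : ℕ) [ExpChar K p]
    {w : K⟦Γ⟧} (hw : 0 < w.orderTop) {j : ℤ} (hj : (j : K) ≠ 0) (κ : ℕ) :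
    ((1 + w) ^ (j * (p : ℤ) ^ κ) - 1).orderTop = p ^ κ • w.orderTop ∧
      ((1 + w) ^ (j * (p : ℤ) ^ κ) - 1).leadingCoeff = j * w.leadingCoeff ^ p ^ κ := by
  have : ExpChar K⟦Γ⟧ p := expChar_of_injective_algebraMap (algebraMap K _).injective p
  have hfrob : (1 + w) ^ p ^ κ = 1 + w ^ p ^ κ := by rw [add_pow_expChar_pow, one_pow]
  have hpos : 0 < (w ^ p ^ κ).orderTop := by
    rw [orderTop_pow]
    exact nsmul_pos hw (pow_ne_zero _ (expChar_pos K p).ne')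
  rw [mul_comm, zpow_mul, ← Nat.cast_pow, zpow_natCast, hfrob, ← orderTop_pow,
    ← leadingCoeff_pow]
  exact orderTop_leadingCoeff_one_add_zpow_sub_one hpos hj

end OrderedGroup

end HahnSeries

theorem stmt_13_general (p : ℕ) (hp : p.Prime) (e : ℕ) (hpe : ¬ p ∣ e)
    (k : Type*) [Field k] [CharP k p]
    (x : LaurentSeries k) (hx : x = HahnSeries.single (1 : ℤ) (1 : k))
    (u : LaurentSeries k) (hu : u ^ e = 1 + x ^ (e * (p - 1)) + x ^ (e * p))
    (hu0 : u.coeff 0 = 1)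
    (γ₁ : LaurentSeries k →ₐ[k] LaurentSeries k) (hγ₁ : γ₁ x = x * u)
    (n j : ℤ) (κ : ℕ) (hn : n = j * (p : ℤ) ^ κ) (hj : ¬ (p : ℤ) ∣ j) :
    γ₁ (x ^ n) - x ^ n ≠ 0 ∧
      (γ₁ (x ^ n) - x ^ n).order = n + (e : ℤ) * (p : ℤ) ^ κ * ((p : ℤ) - 1) ∧
      (γ₁ (x ^ n) - x ^ n).coeff (n + (e : ℤ) * (p : ℤ) ^ κ * ((p : ℤ) - 1)) =
        (j : k) * (e : k)⁻¹ := by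
  have : Fact p.Prime := ⟨hp⟩
  have hek : (e : k) ≠ 0 := by rwa [Ne, CharP.cast_eq_zero_iff k p]
  have hjk : (j : k) ≠ 0 := by rwa [Ne, CharP.intCast_eq_zero_iff k p]
  have he : 0 < e := Nat.pos_of_ne_zero (by rintro rfl; simp at hek)
  have hA : 0 < e * (p - 1) := Nat.mul_pos he (Nat.sub_pos_of_lt hp.one_lt)
  have hxpow (m : ℕ) : x ^ m = single (m : ℤ) 1 := by simp [hx, single_pow]
  obtain ⟨hs_ord, hs_lc⟩ := orderTop_leadingCoeff_single_add_single
    (show ((e * (p - 1) : ℕ) : ℤ) < (e * p : ℕ) by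
      exact_mod_cast Nat.mul_lt_mul_of_pos_left (Nat.sub_lt hp.pos one_pos) he)
    (one_ne_zero (α := k)) 1
  rw [← hxpow, ← hxpow] at hs_ord hs_lc
  have hs_pos : 0 < (x ^ (e * (p - 1)) + x ^ (e * p)).orderTop :=
    hs_ord ▸ WithTop.coe_pos.2 (by exact_mod_cast hA)
  obtain ⟨hord₀, hlc₀⟩ := orderTop_leadingCoeff_sub_one_of_pow_eq_one_add hek hs_pos
    (hu.trans (add_assoc _ _ _)) hu0
  obtain ⟨hord, hlc⟩ :=
    orderTop_leadingCoeff_one_add_zpow_mul_expChar_pow_sub_one p (hord₀ ▸ hs_pos) hjk κ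
  rw [add_sub_cancel, ← hn] at hord hlc
  have hsplit : γ₁ (x ^ n) - x ^ n = single n 1 * (u ^ n - 1) := by
    rw [map_zpow₀, hγ₁, mul_zpow, hx, ← RatFunc.single_zpow, mul_sub, mul_one]
  have hD : (γ₁ (x ^ n) - x ^ n).orderTop = (n + e * p ^ κ * (p - 1) : ℤ) := by
    rw [hsplit, orderTop_mul, orderTop_single one_ne_zero, hord, hord₀, hs_ord,
      ← WithTop.coe_nsmul, ← WithTop.coe_add, WithTop.coe_eq_coe]
    push_cast [Nat.cast_sub hp.one_lt.le]
    ring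
  refine ⟨orderTop_ne_top.1 (hD ▸ WithTop.coe_ne_top), order_eq_of_orderTop_eq hD, ?_⟩
  rw [coeff_eq_leadingCoeff_of_orderTop_eq hD, hsplit, leadingCoeff_mul, leadingCoeff_of_single,
    hlc, eq_inv_of_mul_eq_one_right (hlc₀.trans hs_lc), ← iterateFrobenius_def, map_inv₀,
    map_natCast, one_mul]

/-- In `E_K = k((π_K))` with `π = π_K^e` (`k` of characteristic `p`, `p ∤ e`), let `u` be
the `e`-th root of `1 + π^(p-1) + π^p` with constant term `1` (given by the binomial
series), and let `γ₁` be the `k`-algebra endomorphism with `γ₁(π_K) = π_K · u`.  Then for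
`n = j·p^κ` with `p ∤ j`, the element `(γ₁ - 1)(π_K^n)` is nonzero with lowest-degree
term `(j/e)·π_K^(n + e·p^κ·(p-1))`; in particular its `π_K`-adic valuation is
`n + e·p^κ·(p-1)`. -/
theorem stmt_13 (p : ℕ) (hp : p.Prime) (e : ℕ) (he : 0 < e) (hpe : ¬ p ∣ e)
    (k : Type*) [Field k] [CharP k p]
    (x : LaurentSeries k) (hx : x = HahnSeries.single (1 : ℤ) (1 : k))
    (u : LaurentSeries k) (hu : u ^ e = 1 + x ^ (e * (p - 1)) + x ^ (e * p))
    (hu0 : u.coeff 0 = 1)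
    (γ₁ : LaurentSeries k →ₐ[k] LaurentSeries k) (hγ₁ : γ₁ x = x * u)
    (n j : ℤ) (κ : ℕ) (hn : n = j * (p : ℤ) ^ κ) (hj : ¬ (p : ℤ) ∣ j) :
    γ₁ (x ^ n) - x ^ n ≠ 0 ∧
      (γ₁ (x ^ n) - x ^ n).order = n + (e : ℤ) * (p : ℤ) ^ κ * ((p : ℤ) - 1) ∧
      (γ₁ (x ^ n) - x ^ n).coeff (n + (e : ℤ) * (p : ℤ) ^ κ * ((p : ℤ) - 1)) =
        (j : k) * (e : k)⁻¹ :=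
  stmt_13_general p hp e hpe k x hx u hu hu0 γ₁ hγ₁ n j κ hn hj
end

section
/- Let p be a prime, e \ge 1 with p \nmid e, and let k be a finite field of characteristic p. Let E_K = k((\pi_K)) with \pi = \pi_K^e, equipped with the operator \psi defined via the trace: for a = \sum_i a_i \pi_K^i, the condition \psi(a) = a is equivalent to the system of equations \sum_{n=0}^{p-1} a_{kp+ne} (-1)^n = a_k^{\sigma} for all k \in \mathbb{Z}, where \sigma is the p-power Frobenius on k. Then for any a \in E_K with \psi(a) = a, the \pi_K-adic valuation l(a) of a satisfies l(a) \ge -e, and moreover if l(a) > -e then l(a) \not\equiv -e \pmod{p}. -/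
/-!
Let `l` be the order of `a`, so `a_l ≠ 0`. Evaluating the system at `K = l`, some index
`l p + n e` with `n < p` carries a nonzero coefficient, hence `l ≤ l p + (p - 1) e`, i.e.
`(p - 1)(l + e) ≥ 0`. If `l ≡ -e (mod p)` and `l > -e`, then `l = K p + (p - 1) e` with `K < l`;
the equation at `K` has right-hand side `a_K^p = 0`, and all its terms except the last lie below
the order, leaving `± a_l = 0`.
-/

open Finset

namespace LaurentSeries

variable {k : Type*} [CommRing k] [IsDomain k]

/-- The coefficient form of `ψ(a) = a` on `k((π_K))`, where `π = π_K ^ e`. -/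
def IsPsiFixed (p e : ℕ) (a : LaurentSeries k) : Prop :=
  ∀ K : ℤ, ∑ n ∈ range p, a.coeff (K * p + n * e) * (-1 : k) ^ n = a.coeff K ^ p

variable {p e : ℕ} {a : LaurentSeries k}

theorem IsPsiFixed.order_le {K : ℤ} (hψ : a.IsPsiFixed p e) (hK : a.coeff K ≠ 0) :
    a.order ≤ K * p + (p - 1) * e := by
  have hsum := hψ K ▸ pow_ne_zero p hK
  obtain ⟨n, hn, hterm⟩ := exists_ne_zero_of_sum_ne_zero hsum
  have hnp : (n : ℤ) ≤ p - 1 := by have := mem_range.mp hn; omega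
  calc a.order ≤ K * p + n * e :=
        HahnSeries.order_le_of_coeff_ne_zero (left_ne_zero_of_mul hterm)
    _ ≤ K * p + (p - 1) * e := by gcongr

theorem IsPsiFixed.neg_le_order (hψ : a.IsPsiFixed p e) (hp : 1 < p) (ha : a ≠ 0) :
    -(e : ℤ) ≤ a.order := by
  have h := hψ.order_le (HahnSeries.coeff_order_eq_zero.not.mpr ha)
  have hp' : (1 : ℤ) < p := by exact_mod_cast hp
  nlinarith

theorem IsPsiFixed.order_ne {K : ℤ} (hψ : a.IsPsiFixed p e) (he : 0 < e) (ha : a ≠ 0)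
    (hK : K < a.order) : a.order ≠ K * p + (p - 1) * e := by
  intro hl
  have hp : p ≠ 0 := by rintro rfl; simpa using hψ K
  have hsum := hψ K
  rw [HahnSeries.coeff_eq_zero_of_lt_order hK, zero_pow hp,
    sum_eq_single_of_mem (p - 1) (by simp [Nat.pos_of_ne_zero hp])] at hsum
  · have hidx : K * p + ((p - 1 : ℕ) : ℤ) * e = a.order := by
      rw [hl]; push_cast [Nat.one_le_iff_ne_zero.mpr hp]; ring
    rw [hidx] at hsum
    exact HahnSeries.coeff_order_eq_zero.not.mpr ha
      ((mul_eq_zero.mp hsum).resolve_right (pow_ne_zero _ (neg_ne_zero.mpr one_ne_zero)))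
  · intro n hn hne
    have hn' : (n : ℤ) < p - 1 := by have := mem_range.mp hn; omega
    have he' : (0 : ℤ) < e := by exact_mod_cast he
    rw [HahnSeries.coeff_eq_zero_of_lt_order (by nlinarith), zero_mul]

end LaurentSeries

theorem stmt_16_general (p : ℕ) (hp : p.Prime) (e : ℕ) (he : 0 < e)
    (k : Type*) [Field k]
    (a : LaurentSeries k) (ha0 : a ≠ 0)
    (hψ : ∀ K : ℤ, ∑ n ∈ Finset.range p, a.coeff (K * p + n * e) * (-1 : k) ^ n =
      (a.coeff K) ^ p) :
    -(e : ℤ) ≤ a.order ∧ (-(e : ℤ) < a.order → ¬ a.order ≡ -(e : ℤ) [ZMOD (p : ℤ)]) := by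
  have hψ' : a.IsPsiFixed p e := hψ
  refine ⟨hψ'.neg_le_order hp.one_lt ha0, fun hlt hmod => ?_⟩
  obtain ⟨c, hc⟩ := hmod.dvd
  have hp' : (1 : ℤ) < p := by exact_mod_cast hp.one_lt
  have hc0 : c < 0 := by nlinarith
  refine hψ'.order_ne he ha0 (K := -c - e) (by nlinarith) ?_
  linear_combination -hc

/-- Let `E_K = k((π_K))` with `π = π_K^e` (`k` a finite field of characteristic `p`,
`p ∤ e`, Frobenius `σ : x ↦ x^p`).  If `a = ∑ aᵢ π_K^i` satisfies the system
`∑_{n=0}^{p-1} a_{kp+ne}·(-1)^n = σ(a_k)` for all `k ∈ ℤ` (the condition `ψ(a) = a`),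
then the `π_K`-adic valuation `l(a)` of `a ≠ 0` satisfies `l(a) ≥ -e`, and if
`l(a) > -e` then `l(a) ≢ -e (mod p)`. -/
theorem stmt_16 (p : ℕ) (hp : p.Prime) (e : ℕ) (he : 0 < e) (hpe : ¬ p ∣ e)
    (k : Type*) [Field k] [Fintype k] [CharP k p]
    (a : LaurentSeries k) (ha0 : a ≠ 0)
    (hψ : ∀ K : ℤ, ∑ n ∈ Finset.range p, a.coeff (K * p + n * e) * (-1 : k) ^ n =
      (a.coeff K) ^ p) :
    -(e : ℤ) ≤ a.order ∧ (-(e : ℤ) < a.order → ¬ a.order ≡ -(e : ℤ) [ZMOD (p : ℤ)]) :=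
  stmt_16_general p hp e he k a ha0 hψ
end

section
/- Let p be a prime, e \ge 1 with p \nmid e, k a finite field of characteristic p with Frobenius \sigma. Consider sequences (a_i)_{i \in \mathbb{Z}} in k with a_i = 0 for i sufficiently negative, satisfying \sum_{n=0}^{p-1} a_{kp+ne}(-1)^n = \sigma(a_k) for all k \in \mathbb{Z}. Then for each c \in k^\times and each integer n with n > -e and n \not\equiv -e \pmod p, there exists such a sequence with a_n = c and a_i = 0 for all i < n. -/
/-- Existence of `ψ`-fixed Laurent series with prescribed leading term: for `k` a finite
field of characteristic `p`, `p ∤ e`, `c ∈ k^×`, and `n > -e` with `n ≢ -e (mod p)`,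
there is a sequence `(aᵢ)` (vanishing for `i` sufficiently negative) with
`∑_{m=0}^{p-1} a_{Kp+me}·(-1)^m = σ(a_K)` for all `K`, `aₙ = c`, and `aᵢ = 0` for
`i < n`. -/
theorem stmt_17 (p : ℕ) (hp : p.Prime) (e : ℕ) (he : 0 < e) (hpe : ¬ p ∣ e)
    (k : Type*) [Field k] [Fintype k] [CharP k p]
    (c : k) (hc : c ≠ 0) (n : ℤ) (hn1 : -(e : ℤ) < n)
    (hn2 : ¬ n ≡ -(e : ℤ) [ZMOD (p : ℤ)]) :
    ∃ a : ℤ → k,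
      (∃ N : ℤ, ∀ i < N, a i = 0) ∧
      (∀ K : ℤ, ∑ m ∈ Finset.range p, a (K * p + m * e) * (-1 : k) ^ m = (a K) ^ p) ∧
      a n = c ∧ ∀ i < n, a i = 0 := by
  classical
  obtain ⟨P, hP⟩ : ∃ P, p = P + 1 := ⟨p - 1, by have := hp.pos; omega⟩
  have hP1 : 1 ≤ P := by have := hp.two_le; omega
  have hpz : (p : ℤ) ≠ 0 := by exact_mod_cast hp.pos.ne'
  have hp0 : (0:ℤ) < p := by exact_mod_cast hp.pos
  have hpc : (p : ℤ) = (P : ℤ) + 1 := by rw [hP]; push_cast; ring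
  have he' : (0:ℤ) < (e:ℤ) := by exact_mod_cast he
  have hne : ¬ (p:ℤ) ∣ (n + e) := by
    intro h
    exact hn2 (Int.modEq_iff_dvd.mpr
      (by rw [show -(e:ℤ) - n = -(n + e) by ring]; exact dvd_neg.mpr h))
  set F : ℕ → (ℤ → k) → k := fun t prev =>
    if t = 0 then c
    else if (p:ℤ) ∣ (n + t + e) then
      (-1:k)^P *
        ((prev ((n + t - (P:ℤ) * e) / p))^p -
          ∑ m ∈ Finset.range P,
            prev (((n + t - (P:ℤ) * e) / p) * p + m * e) * (-1:k)^m)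
    else 0 with hFdef
  set b : ℕ → k := WellFounded.fix (Nat.lt_wfRel.wf)
    (fun t ih => F t (fun i => if i < n then 0
      else if h2 : (i - n).toNat < t then ih _ h2 else 0)) with hbdef
  set g : ℕ → ℤ → k := fun t i => if i < n then 0
      else if h2 : (i - n).toNat < t then b ((i - n).toNat) else 0 with hgdef
  have hb : ∀ t, b t = F t (g t) := by
    intro t
    conv_lhs => rw [hbdef]
    rw [WellFounded.fix_eq]
  set a : ℤ → k := fun i => if i < n then 0 else b ((i - n).toNat) with ha
  have hg : ∀ (t : ℕ) (i : ℤ), i < n + t → g t i = a i := by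
    intro t i hi
    by_cases h : i < n
    · simp [hgdef, ha, h]
    · have h2 : (i - n).toNat < t := by omega
      simp [hgdef, ha, h, h2]
  have hzero : ∀ i < n, a i = 0 := by
    intro i hi; simp [ha, hi]
  have hceq : a n = c := by
    have h1 : a n = b 0 := by
      simp only [ha]; rw [if_neg (lt_irrefl n)]; norm_num
    rw [h1, hb 0]
    simp [hFdef]
  have key : ∀ j : ℤ, n < j → (p:ℤ) ∣ (j + e) →
      a j = (-1:k)^P *
        ((a ((j - (P:ℤ) * e) / p))^p -
          ∑ m ∈ Finset.range P,
            a (((j - (P:ℤ) * e) / p) * p + m * e) * (-1:k)^m) := by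
    intro j hj hd
    have hd' := hd
    set K : ℤ := (j - (P:ℤ) * e) / p with hK
    obtain ⟨q, hq⟩ := hd
    have hKq : K = q - e := by
      rw [hK, show j - (P:ℤ) * (e:ℤ) = (p:ℤ) * (q - e) by
        linear_combination hq + (e:ℤ) * hpc]
      exact Int.mul_ediv_cancel_left _ hpz
    have hKp : K * (p:ℤ) = j - (P:ℤ) * e := by
      rw [hKq]; linear_combination -hq - (e:ℤ) * hpc
    have hje : (0:ℤ) < j + e := by linarith
    have hKe : (0:ℤ) < K + e := by
      have h1 : (p:ℤ) * (K + e) = j + e := by rw [hKq]; linear_combination -hq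
      nlinarith [h1, hje, hp0]
    have hKj : K < j := by
      have h2 : j - K = (P:ℤ) * (K + e) := by linear_combination K * hpc - hKp
      have h3 : (0:ℤ) < (P:ℤ) * (K + e) :=
        mul_pos (by exact_mod_cast hP1) hKe
      linarith
    have hmlt : ∀ m ∈ Finset.range P, K * (p:ℤ) + (m:ℤ) * e < j := by
      intro m hm
      have hm' : (m:ℤ) < (P:ℤ) := by exact_mod_cast Finset.mem_range.mp hm
      have := mul_lt_mul_of_pos_right hm' he'
      linarith [hKp]
    have hjn' : ¬ j < n := not_lt.mpr hj.le
    have htj : n + (((j - n).toNat : ℕ) : ℤ) = j := by omega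
    have ht0 : (j - n).toNat ≠ 0 := by omega
    have h1 : a j = b ((j - n).toNat) := by simp only [ha]; rw [if_neg hjn']
    rw [h1, hb, hFdef]
    simp only []
    rw [if_neg ht0, htj, if_pos hd', ← hK]
    have hgK : g ((j - n).toNat) K = a K := hg _ _ (by omega)
    have hgm : ∀ m ∈ Finset.range P,
        g ((j - n).toNat) (K * (p:ℤ) + (m:ℤ) * (e:ℤ))
          = a (K * (p:ℤ) + (m:ℤ) * (e:ℤ)) := by
      intro m hm
      have := hmlt m hm
      exact hg _ _ (by omega)
    rw [hgK, Finset.sum_congr rfl (fun m hm => by rw [hgm m hm])]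
  refine ⟨a, ⟨n, hzero⟩, ?_, hceq, hzero⟩
  intro K
  have hrange : Finset.range p = Finset.range (P + 1) := by rw [hP]
  rw [hrange, Finset.sum_range_succ]
  set j : ℤ := K * (p:ℤ) + (P:ℤ) * (e:ℤ) with hj
  rcases lt_trichotomy j n with hcase | hcase | hcase
  · -- everything vanishes
    have hj' : K * (p:ℤ) + (P:ℤ) * (e:ℤ) < n := by rw [← hj]; exact hcase
    have hterm : ∀ m : ℕ, (m:ℤ) ≤ (P:ℤ) → a (K * (p:ℤ) + (m:ℤ) * (e:ℤ)) = 0 := by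
      intro m hm'
      have h2 : (m:ℤ) * e ≤ (P:ℤ) * e := mul_le_mul_of_nonneg_right hm' he'.le
      exact hzero _ (by linarith)
    have hjz : a j = 0 := by rw [hj]; exact hterm P le_rfl
    have hK0 : a K = 0 := by
      apply hzero
      by_contra hKn
      push_neg at hKn
      have h2 : (0:ℤ) < K + e := by linarith
      have h3 : (0:ℤ) ≤ (P:ℤ) * (K + e) :=
        mul_nonneg (by positivity) h2.le
      have h4 : j - K = (P:ℤ) * (K + e) := by rw [hj]; linear_combination K * hpc
      linarith
    rw [Finset.sum_eq_zero (fun m hm => by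
      rw [hterm m (by exact_mod_cast (Finset.mem_range.mp hm).le), zero_mul]),
      hjz, hK0, zero_mul, add_zero, zero_pow hp.pos.ne']
  · exact absurd (⟨K + e, by rw [← hcase, hj, hpc]; ring⟩ : (p:ℤ) ∣ n + e) hne
  · have hdvd : (p:ℤ) ∣ j + e := ⟨K + e, by rw [hj, hpc]; ring⟩
    have hdiv : (j - (P:ℤ) * e) / (p:ℤ) = K := by
      rw [show j - (P:ℤ) * (e:ℤ) = K * (p:ℤ) by rw [hj]; ring]
      exact Int.mul_ediv_cancel _ hpz
    have hkey := key j hcase hdvd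
    rw [hdiv] at hkey
    rw [hkey]
    have hu : ((-1:k)^P) * ((-1:k)^P) = 1 := by
      rw [← pow_add]; exact Even.neg_one_pow ⟨P, rfl⟩
    linear_combination
      ((a K)^(p) - ∑ m ∈ Finset.range P, a (K * (p:ℤ) + (m:ℤ) * (e:ℤ)) * (-1:k)^m) * hu
end
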